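/- arXiv:1412.7986 — 5 statements merged into one kernel-verified Lean document; each statement's English description precedes it below -/
import Mathlib

section
/- For every γ ∈ (1 − 2π⁻², 1) one has m_γ < 1. -/
open MeasureTheory Set Real

noncomputable section

/-- Pairs `(y, y')` representing a function of Sobolev class `W¹₂[0,1]`:
`y` is absolutely continuous on `[0,1]` (being an integral of `y'`)
with derivative `y'` belonging to `L²[0,1]`. -/
def W12 : Set ((ℝ → ℝ) × (ℝ → ℝ)) :=
  {p | (∀ x ∈ Icc (0:ℝ) 1, p.1 x = p.1 0 + ∫ t in (0:ℝ)..x, p.2 t) ∧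
    IntervalIntegrable p.2 volume 0 1 ∧
    IntervalIntegrable (fun t => (p.2 t) ^ 2) volume 0 1}

/-- The Rayleigh quotient `(∫₀¹ ((y')² + q y²) dx) / (∫₀¹ y² dx)`. -/
def Rayleigh (q : ℝ → ℝ) (p : (ℝ → ℝ) × (ℝ → ℝ)) : ℝ :=
  (∫ t in (0:ℝ)..1, ((p.2 t) ^ 2 + q t * (p.1 t) ^ 2)) /
    ∫ t in (0:ℝ)..1, (p.1 t) ^ 2

/-- The smallest eigenvalue `λ₁(q)` of the Neumann problem `-y'' + q y = λ y`,
`y'(0) = y'(1) = 0`, defined as the infimum of Rayleigh quotients over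
nonzero `y ∈ W¹₂[0,1]`. -/
def lambda1 (q : ℝ → ℝ) : ℝ :=
  sInf {r | ∃ p ∈ W12, 0 < (∫ t in (0:ℝ)..1, (p.1 t) ^ 2) ∧ r = Rayleigh q p}

/-- The class `A_γ` of potentials: `q ∈ L¹[0,1]`, `q ≥ 0` a.e. on `[0,1]`,
`∫₀¹ q^γ dx = 1`. -/
def Agamma (γ : ℝ) : Set (ℝ → ℝ) :=
  {q | IntervalIntegrable q volume 0 1 ∧
    (∀ᵐ t ∂(volume.restrict (Icc (0:ℝ) 1)), 0 ≤ q t) ∧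
    (∫ t in (0:ℝ)..1, q t ^ γ) = 1}

/-- `m_γ := inf_{q ∈ A_γ} λ₁(q)`. -/
def mGamma (γ : ℝ) : ℝ := sInf (lambda1 '' Agamma γ)

/-- The set `M` of uniformly positive functions of class `W¹₂[0,1]`. -/
def Mset : Set ((ℝ → ℝ) × (ℝ → ℝ)) :=
  {p ∈ W12 | ∃ ζ > (0:ℝ), ∀ x ∈ Icc (0:ℝ) 1, ζ ≤ p.1 x}

/-- `J_γ(y) := ∫₀¹ (y')² dx + (∫₀¹ y^{2γ/(γ−1)} dx)^{(γ−1)/γ}`. -/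
def Jg (γ : ℝ) (p : (ℝ → ℝ) × (ℝ → ℝ)) : ℝ :=
  (∫ t in (0:ℝ)..1, (p.2 t) ^ 2) +
    (∫ t in (0:ℝ)..1, (p.1 t) ^ (2 * γ / (γ - 1))) ^ ((γ - 1) / γ)

/-- `G_γ(y) := J_γ(y) / ∫₀¹ y² dx`. -/
def Gg (γ : ℝ) (p : (ℝ → ℝ) × (ℝ → ℝ)) : ℝ :=
  Jg γ p / ∫ t in (0:ℝ)..1, (p.1 t) ^ 2

/-!
Take the potential `q = (1 + δ cos πt)^{1/γ}`, for which `∫₀¹ q^γ = 1` exactly, and the test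
function `y = 1 + ε cos πt`. Writing `r = 1/γ`, the expansion
`(1 + v)^r = 1 + r v + r(r-1)/2 v² + O(|v|³)` shows that, up to cubic terms,
`∫ y'² + ∫ q y² - ∫ y²` is the quadratic form `π²ε²/2 + rδε + r(r-1)δ²/4`. This form takes
negative values iff `π²(r - 1) < 2r`, i.e. iff `γ > 1 - 2/π²`; small `(δ, ε)` in such a
direction give a Rayleigh quotient below `1`.
-/

lemma integral_quadratic (a b c v : ℝ) :
    ∫ u in (0:ℝ)..v, (a + b * u + c * u ^ 2) = a * v + b / 2 * v ^ 2 + c / 3 * v ^ 3 := by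
  rw [intervalIntegral.integral_add (Continuous.intervalIntegrable (by fun_prop) _ _)
      (Continuous.intervalIntegrable (by fun_prop) _ _),
    intervalIntegral.integral_add intervalIntegrable_const
      (Continuous.intervalIntegrable (by fun_prop) _ _),
    intervalIntegral.integral_const_mul, intervalIntegral.integral_const_mul, integral_id,
    integral_pow]
  simp
  ring

lemma one_add_mul_add_mul_sq_le_rpow_one_add {s u : ℝ} (hs₀ : 0 ≤ s) (hs₁ : s ≤ 1)
    (hu : -1 < u) (hu₀ : u ≤ 0) : 1 + s * u + (s - 1) * u ^ 2 ≤ (1 + u) ^ s := by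
  have hpos : 0 < 1 + (1 - s) * u := by nlinarith
  have hsplit : (1 + u) ^ (1 - s) * (1 + u) ^ s = 1 + u := by
    rw [← rpow_add (by linarith), sub_add_cancel, rpow_one]
  have hbern : (1 + u) ^ (1 - s) ≤ 1 + (1 - s) * u :=
    rpow_one_add_le_one_add_mul_self hu.le (by linarith) (by linarith)
  have hprod : (1 + s * u + (s - 1) * u ^ 2) * (1 + (1 - s) * u) ≤ 1 + u := by
    nlinarith [mul_nonneg (sq_nonneg ((1 - s) * u)) (by linarith : 0 ≤ 1 + u)]
  have hX : 1 + u ≤ (1 + (1 - s) * u) * (1 + u) ^ s :=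
    hsplit.symm.trans_le (mul_le_mul_of_nonneg_right hbern (rpow_nonneg (by linarith) s))
  exact le_of_mul_le_mul_right (hprod.trans (hX.trans_eq (mul_comm _ _))) hpos

section OneAddRpow

variable {r v : ℝ}

lemma intervalIntegrable_one_add_rpow (hr : 0 ≤ r) (a b : ℝ) :
    IntervalIntegrable (fun u => (1 + u) ^ r) volume a b :=
  ((continuous_const.add continuous_id).rpow_const fun _ => Or.inr hr).intervalIntegrable _ _

lemma one_add_rpow_eq_one_add_integral (hr : 0 < r) :
    (1 + v) ^ r = 1 + r * ∫ u in (0:ℝ)..v, (1 + u) ^ (r - 1) := by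
  rw [intervalIntegral.integral_comp_add_left (fun x => x ^ (r - 1)),
    integral_rpow (Or.inl (by linarith)), sub_add_cancel, add_zero, one_rpow]
  field_simp
  ring

lemma one_add_rpow_le_of_nonneg (hr₁ : 1 ≤ r) (hr₂ : r ≤ 2) (hv : 0 ≤ v) :
    (1 + v) ^ r ≤ 1 + r * v + r * (r - 1) / 2 * v ^ 2 := by
  have hint : ∫ u in (0:ℝ)..v, (1 + u) ^ (r - 1) ≤
      ∫ u in (0:ℝ)..v, (1 + (r - 1) * u + 0 * u ^ 2) :=
    intervalIntegral.integral_mono_on hv (intervalIntegrable_one_add_rpow (by linarith) _ _)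
      (Continuous.intervalIntegrable (by fun_prop) _ _) fun u hu => by
        simpa using
          rpow_one_add_le_one_add_mul_self (by linarith [hu.1]) (by linarith) (by linarith)
  rw [integral_quadratic] at hint
  rw [one_add_rpow_eq_one_add_integral (by linarith)]
  nlinarith

lemma one_add_rpow_le_of_nonpos (hr₁ : 1 ≤ r) (hr₂ : r ≤ 2) (hv : -1 < v) (hv₀ : v ≤ 0) :
    (1 + v) ^ r ≤ 1 + r * v + r * (r - 1) / 2 * v ^ 2 + r * (r - 2) / 3 * v ^ 3 := by
  have hint : ∫ u in v..0, (1 + (r - 1) * u + (r - 2) * u ^ 2) ≤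
      ∫ u in v..0, (1 + u) ^ (r - 1) :=
    intervalIntegral.integral_mono_on hv₀ (Continuous.intervalIntegrable (by fun_prop) _ _)
      (intervalIntegrable_one_add_rpow (by linarith) _ _) fun u hu => by
        have := one_add_mul_add_mul_sq_le_rpow_one_add (s := r - 1) (by linarith) (by linarith)
          (by linarith [hu.1]) hu.2
        linarith
  rw [intervalIntegral.integral_symm, intervalIntegral.integral_symm 0, integral_quadratic] at hint
  rw [one_add_rpow_eq_one_add_integral (by linarith)]
  nlinarith

lemma one_add_rpow_le (hr₁ : 1 ≤ r) (hr₂ : r ≤ 2) (hv : -1 < v) :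
    (1 + v) ^ r ≤ 1 + r * v + r * (r - 1) / 2 * v ^ 2 + |v| ^ 3 := by
  rcases le_total 0 v with hv₀ | hv₀
  · linarith [one_add_rpow_le_of_nonneg hr₁ hr₂ hv₀, pow_nonneg (abs_nonneg v) 3]
  · have hcube : r * (r - 2) / 3 * v ^ 3 ≤ |v| ^ 3 := by
      rw [abs_of_nonpos hv₀]
      have hcoeff : 0 ≤ 1 + r * (r - 2) / 3 := by nlinarith
      nlinarith [mul_nonneg (pow_nonneg (neg_nonneg.mpr hv₀) 3) hcoeff]
    linarith [one_add_rpow_le_of_nonpos hr₁ hr₂ hv hv₀]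

lemma one_add_rpow_mul_one_add_sq_le {w : ℝ} (hr₁ : 1 ≤ r) (hr₂ : r ≤ 2) (hv : -1 < v)
    (hw : |w| ≤ 1 / 2) :
    (1 + v) ^ r * (1 + w) ^ 2 ≤ 1 + r * v + 2 * w
      + (r * (r - 1) / 2 * v ^ 2 + 2 * r * v * w + w ^ 2) + 3 * (|v| + |w|) ^ 3 := by
  refine (mul_le_mul_of_nonneg_right (one_add_rpow_le hr₁ hr₂ hv) (sq_nonneg (1 + w))).trans ?_
  have hk₀ : 0 ≤ r * (r - 1) / 2 := by nlinarith
  have hk₁ : r * (r - 1) / 2 ≤ 1 := by nlinarith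
  set a := |v|
  set b := |w|
  set k := r * (r - 1) / 2
  have ha : 0 ≤ a := abs_nonneg v
  have hb : 0 ≤ b := abs_nonneg w
  have ha2b : 0 ≤ a ^ 2 * b := by positivity
  have hab2 : 0 ≤ a * b ^ 2 := by positivity
  have hvw2 : v * w ^ 2 ≤ a * b ^ 2 := by
    rw [← sq_abs w]; exact mul_le_mul_of_nonneg_right (le_abs_self v) (sq_nonneg b)
  have hv2w : v ^ 2 * w ≤ a ^ 2 * b := by
    rw [← sq_abs v]; exact mul_le_mul_of_nonneg_left (le_abs_self w) (sq_nonneg a)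
  have hv2w2 : v ^ 2 * w ^ 2 ≤ a ^ 2 * b / 2 := by
    rw [← sq_abs v, ← sq_abs w]; nlinarith
  have hw2 : (1 + w) ^ 2 ≤ 9 / 4 := by nlinarith [abs_le.mp hw]
  have h₁ : r * (v * w ^ 2) ≤ 2 * (a * b ^ 2) := by nlinarith
  have h₂ : k * (v ^ 2 * w) ≤ a ^ 2 * b := by nlinarith
  have h₃ : k * (v ^ 2 * w ^ 2) ≤ a ^ 2 * b / 2 := by nlinarith [sq_nonneg (v * w)]
  have h₄ : a ^ 3 * (1 + w) ^ 2 ≤ 9 / 4 * a ^ 3 := by nlinarith [pow_nonneg ha 3]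
  linarith [pow_nonneg ha 3, pow_nonneg hb 3]

end OneAddRpow

lemma integral_cos_quadratic (a b c : ℝ) :
    ∫ t in (0:ℝ)..1, (a + b * cos (π * t) + c * cos (π * t) ^ 2) = a + c / 2 := by
  have hcos : ∫ t in (0:ℝ)..1, cos (π * t) = 0 := by
    simp [intervalIntegral.integral_comp_mul_left (fun x => cos x) pi_ne_zero]
  have hcos_sq : ∫ t in (0:ℝ)..1, cos (π * t) ^ 2 = 1 / 2 := by
    simp [intervalIntegral.integral_comp_mul_left (fun x => cos x ^ 2) pi_ne_zero, integral_cos_sq]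
    field_simp
  rw [intervalIntegral.integral_add (Continuous.intervalIntegrable (by fun_prop) _ _)
      (Continuous.intervalIntegrable (by fun_prop) _ _),
    intervalIntegral.integral_add intervalIntegrable_const
      (Continuous.intervalIntegrable (by fun_prop) _ _),
    intervalIntegral.integral_const_mul, intervalIntegral.integral_const_mul, hcos, hcos_sq]
  simp
  ring

lemma one_add_mul_cos_pos {δ : ℝ} (hδ : |δ| < 1) (t : ℝ) : 0 < 1 + δ * cos t := by
  have : |δ * cos t| < 1 := by
    rw [abs_mul]; exact (mul_le_of_le_one_right (abs_nonneg δ) (abs_cos_le_one t)).trans_lt hδ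
  linarith [neg_abs_le (δ * cos t)]

def cosPotential (r δ t : ℝ) : ℝ := (1 + δ * cos (π * t)) ^ r

def cosTest (ε : ℝ) : (ℝ → ℝ) × (ℝ → ℝ) :=
  (fun t => 1 + ε * cos (π * t), fun t => -(ε * π * sin (π * t)))

lemma continuous_cosPotential {δ : ℝ} (r : ℝ) (hδ : |δ| < 1) : Continuous (cosPotential r δ) :=
  (by fun_prop : Continuous fun t => 1 + δ * cos (π * t)).rpow_const
    fun t => Or.inl (one_add_mul_cos_pos hδ _).ne'

lemma cosPotential_mem_Agamma {γ δ : ℝ} (hγ : γ ≠ 0) (hδ : |δ| < 1) :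
    cosPotential γ⁻¹ δ ∈ Agamma γ := by
  refine ⟨(continuous_cosPotential _ hδ).intervalIntegrable _ _,
    ae_of_all _ fun t => rpow_nonneg (one_add_mul_cos_pos hδ _).le _, ?_⟩
  have hpow (t : ℝ) : cosPotential γ⁻¹ δ t ^ γ = 1 + δ * cos (π * t) + 0 * cos (π * t) ^ 2 := by
    rw [cosPotential, ← rpow_mul (one_add_mul_cos_pos hδ _).le, inv_mul_cancel₀ hγ, rpow_one]
    ring
  simp_rw [hpow, integral_cos_quadratic]
  ring

lemma continuous_cosTest_fst (ε : ℝ) : Continuous (cosTest ε).1 := by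
  simp only [cosTest]; fun_prop

lemma continuous_cosTest_snd (ε : ℝ) : Continuous (cosTest ε).2 := by
  simp only [cosTest]; fun_prop

lemma hasDerivAt_cosTest (ε t : ℝ) : HasDerivAt (cosTest ε).1 ((cosTest ε).2 t) t := by
  refine ((((hasDerivAt_id' t).const_mul π).cos.const_mul ε).const_add 1).congr_deriv ?_
  simp only [cosTest]
  ring

lemma cosTest_mem_W12 (ε : ℝ) : cosTest ε ∈ W12 := by
  have hcont := continuous_cosTest_snd ε
  refine ⟨fun x _ => ?_, hcont.intervalIntegrable _ _, (hcont.pow 2).intervalIntegrable _ _⟩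
  rw [intervalIntegral.integral_eq_sub_of_hasDerivAt (fun t _ => hasDerivAt_cosTest ε t)
    (hcont.intervalIntegrable _ _)]
  ring

lemma integral_cosTest_fst_sq (ε : ℝ) :
    ∫ t in (0:ℝ)..1, (cosTest ε).1 t ^ 2 = 1 + ε ^ 2 / 2 := by
  have h (t : ℝ) : (cosTest ε).1 t ^ 2 = 1 + 2 * ε * cos (π * t) + ε ^ 2 * cos (π * t) ^ 2 := by
    simp only [cosTest]; ring
  simp_rw [h, integral_cos_quadratic]

lemma integral_cosTest_snd_sq (ε : ℝ) :
    ∫ t in (0:ℝ)..1, (cosTest ε).2 t ^ 2 = π ^ 2 * ε ^ 2 / 2 := by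
  have h (t : ℝ) : (cosTest ε).2 t ^ 2 =
      π ^ 2 * ε ^ 2 + 0 * cos (π * t) + -(π ^ 2 * ε ^ 2) * cos (π * t) ^ 2 := by
    simp only [cosTest]; linear_combination (π ^ 2 * ε ^ 2) * sin_sq (π * t)
  simp_rw [h, integral_cos_quadratic]
  ring

lemma integral_cosPotential_mul_cosTest_sq_le {r δ ε : ℝ} (hr₁ : 1 ≤ r) (hr₂ : r ≤ 2)
    (hδ : |δ| < 1) (hε : |ε| ≤ 1 / 2) :
    ∫ t in (0:ℝ)..1, cosPotential r δ t * (cosTest ε).1 t ^ 2 ≤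
      1 + 3 * (|δ| + |ε|) ^ 3 + (r * (r - 1) / 2 * δ ^ 2 + 2 * r * δ * ε + ε ^ 2) / 2 := by
  have := continuous_cosPotential r hδ
  have := continuous_cosTest_fst ε
  rw [← integral_cos_quadratic _ (r * δ + 2 * ε)]
  refine intervalIntegral.integral_mono_on zero_le_one
    (Continuous.intervalIntegrable (by fun_prop) _ _)
    (Continuous.intervalIntegrable (by fun_prop) _ _) fun t _ => ?_
  set c := cos (π * t)
  have hc : |c| ≤ 1 := abs_cos_le_one _
  have hδc : |δ * c| ≤ |δ| := by rw [abs_mul]; exact mul_le_of_le_one_right (abs_nonneg δ) hc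
  have hεc : |ε * c| ≤ |ε| := by rw [abs_mul]; exact mul_le_of_le_one_right (abs_nonneg ε) hc
  have hcube : (|δ * c| + |ε * c|) ^ 3 ≤ (|δ| + |ε|) ^ 3 := by gcongr
  have := one_add_rpow_mul_one_add_sq_le hr₁ hr₂ (v := δ * c) (w := ε * c)
    (by linarith [neg_abs_le (δ * c)]) (hεc.trans hε)
  simp only [cosPotential, cosTest]
  linarith

lemma rayleigh_cos_lt_one {r δ ε : ℝ} (hr₁ : 1 ≤ r) (hr₂ : r ≤ 2) (hδ : |δ| < 1)
    (hε : |ε| ≤ 1 / 2)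
    (h : π ^ 2 * ε ^ 2 / 2 + (r * (r - 1) / 2 * δ ^ 2 + 2 * r * δ * ε) / 2
      + 3 * (|δ| + |ε|) ^ 3 < 0) :
    Rayleigh (cosPotential r δ) (cosTest ε) < 1 := by
  have := continuous_cosPotential r hδ
  have := continuous_cosTest_fst ε
  have := continuous_cosTest_snd ε
  rw [Rayleigh, div_lt_one (by rw [integral_cosTest_fst_sq]; positivity),
    intervalIntegral.integral_add (Continuous.intervalIntegrable (by fun_prop) _ _)
      (Continuous.intervalIntegrable (by fun_prop) _ _),
    integral_cosTest_snd_sq, integral_cosTest_fst_sq]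
  linarith [integral_cosPotential_mul_cosTest_sq_le hr₁ hr₂ hδ hε]

lemma exists_rayleigh_cos_lt_one {r : ℝ} (hr₁ : 1 < r) (hr : π ^ 2 * (r - 1) < 2 * r) :
    ∃ δ, |δ| < 1 ∧ ∃ ε, Rayleigh (cosPotential r δ) (cosTest ε) < 1 := by
  have hπ : 9 < π ^ 2 := by nlinarith [pi_gt_three]
  have hρ₁ : r - 1 ≤ 1 := by nlinarith [mul_pos (sub_pos.2 hπ) (sub_pos.2 hr₁)]
  set κ := (r - 1) * (r - π ^ 2 * (r - 1) / 2)
  have hκ : 0 < κ := mul_pos (by linarith) (by linarith)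
  set η := min (1 / 4) (κ / 162)
  have hη₀ : 0 < η := lt_min (by norm_num) (by positivity)
  have hη₁ : η ≤ 1 / 4 := min_le_left _ _
  have hηκ : η ≤ κ / 162 := min_le_right _ _
  have hδ : |-(2 * η)| = 2 * η := by rw [abs_neg, abs_of_pos (by positivity)]
  have hε : |(r - 1) * η| = (r - 1) * η := abs_of_pos (by nlinarith)
  refine ⟨-(2 * η), by linarith, (r - 1) * η,
    rayleigh_cos_lt_one hr₁.le (by linarith) (by linarith) (by nlinarith) ?_⟩
  -- along `(δ, ε) = η (-2, r - 1)` the quadratic form is `-κ η²` and the cubic remainder `≤ 81 η³`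
  have hquad : π ^ 2 * ((r - 1) * η) ^ 2 / 2 + (r * (r - 1) / 2 * (-(2 * η)) ^ 2
      + 2 * r * (-(2 * η)) * ((r - 1) * η)) / 2 = -κ * η ^ 2 := by ring
  have hcubic : 3 * (|-(2 * η)| + |(r - 1) * η|) ^ 3 ≤ 81 * η ^ 3 := by
    rw [hδ, hε, ← add_mul, mul_pow]
    have : (2 + (r - 1)) ^ 3 ≤ 3 ^ 3 := pow_le_pow_left₀ (by linarith) (by linarith) 3
    nlinarith [pow_pos hη₀ 3]
  nlinarith [pow_pos hη₀ 2]

lemma rayleigh_nonneg {q : ℝ → ℝ} (hq : ∀ᵐ t ∂(volume.restrict (Icc (0:ℝ) 1)), 0 ≤ q t)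
    (p : (ℝ → ℝ) × (ℝ → ℝ)) : 0 ≤ Rayleigh q p := by
  refine div_nonneg ?_ (intervalIntegral.integral_nonneg zero_le_one fun t _ => sq_nonneg _)
  rw [intervalIntegral.integral_of_le zero_le_one]
  refine integral_nonneg_of_ae ?_
  filter_upwards [ae_restrict_of_ae_restrict_of_subset Ioc_subset_Icc_self hq] with t ht
  positivity

lemma lambda1_le_rayleigh {q : ℝ → ℝ} (hq : ∀ᵐ t ∂(volume.restrict (Icc (0:ℝ) 1)), 0 ≤ q t)
    {p : (ℝ → ℝ) × (ℝ → ℝ)} (hp : p ∈ W12) (hpos : 0 < ∫ t in (0:ℝ)..1, (p.1 t) ^ 2) :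
    lambda1 q ≤ Rayleigh q p :=
  csInf_le ⟨0, by rintro _ ⟨p', -, -, rfl⟩; exact rayleigh_nonneg hq p'⟩ ⟨p, hp, hpos, rfl⟩

lemma lambda1_nonneg {q : ℝ → ℝ} (hq : ∀ᵐ t ∂(volume.restrict (Icc (0:ℝ) 1)), 0 ≤ q t) :
    0 ≤ lambda1 q :=
  Real.sInf_nonneg (by rintro _ ⟨p, -, -, rfl⟩; exact rayleigh_nonneg hq p)

lemma mGamma_le_lambda1 {γ : ℝ} {q : ℝ → ℝ} (hq : q ∈ Agamma γ) : mGamma γ ≤ lambda1 q :=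
  csInf_le ⟨0, by rintro _ ⟨q', hq', rfl⟩; exact lambda1_nonneg hq'.2.1⟩ ⟨q, hq, rfl⟩

/-- For every `γ ∈ (1 − 2π⁻², 1)` one has `m_γ < 1`. -/
theorem mGamma_lt_one (γ : ℝ) (hγ : γ ∈ Ioo (1 - 2 / π ^ 2) 1) :
    mGamma γ < 1 := by
  obtain ⟨hγ₀, hγ₁⟩ := hγ
  have hπ : 2 < π ^ 2 := by nlinarith [pi_gt_three]
  have hγpos : 0 < γ := by
    have : 2 / π ^ 2 < 1 := (div_lt_one (by positivity)).mpr hπ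
    linarith
  have hγπ : π ^ 2 * (1 - γ) < 2 := by
    rw [sub_lt_comm, lt_div_iff₀ (by positivity)] at hγ₀
    linarith
  have hr : π ^ 2 * (γ⁻¹ - 1) < 2 * γ⁻¹ := by
    have : π ^ 2 * (γ⁻¹ - 1) = π ^ 2 * (1 - γ) * γ⁻¹ := by field_simp
    rw [this]
    exact mul_lt_mul_of_pos_right hγπ (inv_pos.2 hγpos)
  obtain ⟨δ, hδ, ε, hlt⟩ := exists_rayleigh_cos_lt_one (one_lt_inv₀ hγpos |>.mpr hγ₁) hr
  have hq := cosPotential_mem_Agamma hγpos.ne' hδ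
  calc mGamma γ ≤ lambda1 (cosPotential γ⁻¹ δ) := mGamma_le_lambda1 hq
    _ ≤ Rayleigh (cosPotential γ⁻¹ δ) (cosTest ε) :=
      lambda1_le_rayleigh hq.2.1 (cosTest_mem_W12 ε)
        (by rw [integral_cosTest_fst_sq]; positivity)
    _ < 1 := hlt
end
end

section
/- Let γ ∈ (0,1) and let y be uniformly positive of Sobolev class W¹₂[0,1]. Define q* := (∫₀¹ y^{2γ/(γ−1)} dx)^{−1/γ} · y^{2/(γ−1)}. Then q* ∈ A_γ and ∫₀¹ ((y')² + q* y²) dx = J_γ(y), i.e. the Rayleigh quotient of q* at y equals G_γ(y). -/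
open MeasureTheory Set Real

noncomputable section

lemma qstar_aux (γ : ℝ) (hγ : γ ∈ Ioo (0:ℝ) 1) (y y' : ℝ → ℝ)
    (hy : ∀ x ∈ Icc (0:ℝ) 1, y x = y 0 + ∫ t in (0:ℝ)..x, y' t)
    (hi : IntervalIntegrable y' volume 0 1)
    (hi2 : IntervalIntegrable (fun t => (y' t) ^ 2) volume 0 1)
    (ζ : ℝ) (hζ : 0 < ζ) (hlb : ∀ x ∈ Icc (0:ℝ) 1, ζ ≤ y x) :
    (IntervalIntegrable (fun t => (∫ s in (0:ℝ)..1, (y s) ^ (2 * γ / (γ - 1))) ^ (-(1 / γ)) *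
        (y t) ^ (2 / (γ - 1))) volume 0 1 ∧
      (∀ᵐ t ∂(volume.restrict (Icc (0:ℝ) 1)), 0 ≤ (∫ s in (0:ℝ)..1, (y s) ^ (2 * γ / (γ - 1))) ^ (-(1 / γ)) *
        (y t) ^ (2 / (γ - 1))) ∧
      (∫ t in (0:ℝ)..1, ((∫ s in (0:ℝ)..1, (y s) ^ (2 * γ / (γ - 1))) ^ (-(1 / γ)) *
        (y t) ^ (2 / (γ - 1))) ^ γ) = 1) ∧
    (∫ t in (0:ℝ)..1, ((y' t) ^ 2 +
        ((∫ s in (0:ℝ)..1, (y s) ^ (2 * γ / (γ - 1))) ^ (-(1 / γ)) *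
          (y t) ^ (2 / (γ - 1))) * (y t) ^ 2)) =
      (∫ t in (0:ℝ)..1, (y' t) ^ 2) +
        (∫ t in (0:ℝ)..1, (y t) ^ (2 * γ / (γ - 1))) ^ ((γ - 1) / γ) := by
  obtain ⟨hγ0, hγ1⟩ := hγ
  have hγ1' : γ - 1 < 0 := by linarith
  have hγ1n : γ - 1 ≠ 0 := ne_of_lt hγ1'
  have hγn : γ ≠ 0 := ne_of_gt hγ0
  have h01 : uIcc (0:ℝ) 1 = Icc 0 1 := uIcc_of_le zero_le_one
  set e : ℝ := 2 * γ / (γ - 1) with he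
  set f : ℝ := 2 / (γ - 1) with hf
  have he_neg : e < 0 := div_neg_of_pos_of_neg (by linarith) hγ1'
  have hpos : ∀ x ∈ Icc (0:ℝ) 1, 0 < y x := fun x hx => lt_of_lt_of_le hζ (hlb x hx)
  have hcont : ContinuousOn y (Icc 0 1) := by
    have h2 : ContinuousOn (fun x => y 0 + ∫ t in (0:ℝ)..x, y' t) (Icc 0 1) := by
      refine continuousOn_const.add ?_
      have := intervalIntegral.continuousOn_primitive_interval' hi (a := 0) left_mem_uIcc
      rwa [h01] at this
    exact h2.congr hy
  have hcr : ∀ r : ℝ, ContinuousOn (fun t => y t ^ r) (Icc 0 1) := fun r =>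
    hcont.rpow_const (fun t ht => Or.inl (ne_of_gt (hpos t ht)))
  have hir : ∀ r : ℝ, IntervalIntegrable (fun t => y t ^ r) volume 0 1 := fun r => by
    apply ContinuousOn.intervalIntegrable; rw [h01]; exact hcr r
  obtain ⟨x₀, hx₀, hub⟩ := isCompact_Icc.exists_isMaxOn (Set.nonempty_Icc.mpr zero_le_one) hcont
  set M := y x₀ with hM
  have hMpos : 0 < M := hpos x₀ hx₀
  set c : ℝ := ∫ s in (0:ℝ)..1, y s ^ e with hc
  have hcpos : 0 < c := by
    have h1 : (∫ _ in (0:ℝ)..1, M ^ e) ≤ c := by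
      apply intervalIntegral.integral_mono_on zero_le_one (intervalIntegrable_const) (hir e)
      exact fun t ht => rpow_le_rpow_of_nonpos (hpos t ht) (hub ht) he_neg.le
    have h2 : (∫ _ in (0:ℝ)..1, M ^ e) = M ^ e := by simp
    rw [h2] at h1
    exact lt_of_lt_of_le (rpow_pos_of_pos hMpos e) h1
  have hfe : f * γ = e := by rw [hf, he]; ring
  have hmg : -(1/γ) * γ = -1 := by field_simp
  have key1 : ∀ t ∈ Icc (0:ℝ) 1, (c ^ (-(1/γ)) * y t ^ f) ^ γ = c⁻¹ * y t ^ e := by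
    intro t ht
    have hyt := hpos t ht
    rw [mul_rpow (rpow_nonneg hcpos.le _) (rpow_nonneg hyt.le _),
      ← rpow_mul hcpos.le, ← rpow_mul hyt.le, hfe, hmg, rpow_neg_one]
  have key2 : ∀ t ∈ Icc (0:ℝ) 1, (c ^ (-(1/γ)) * y t ^ f) * y t ^ 2 = c ^ (-(1/γ)) * y t ^ e := by
    intro t ht
    have hyt := hpos t ht
    rw [mul_assoc, ← rpow_natCast (y t) 2, ← rpow_add hyt]
    have h2 : f + ((2:ℕ):ℝ) = e := by push_cast; rw [hf, he]; field_simp; ring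
    rw [h2]
  -- integrability of q*
  have hq_int : IntervalIntegrable (fun t => c ^ (-(1/γ)) * y t ^ f) volume 0 1 :=
    (hir f).const_mul _
  refine ⟨⟨hq_int, ?_, ?_⟩, ?_⟩
  · refine (ae_restrict_iff' measurableSet_Icc).mpr (Filter.Eventually.of_forall fun t ht => ?_)
    exact mul_nonneg (rpow_nonneg hcpos.le _) (rpow_nonneg (hpos t ht).le _)
  · rw [intervalIntegral.integral_congr (g := fun t => c⁻¹ * y t ^ e)
      (fun t ht => key1 t (h01 ▸ ht)), intervalIntegral.integral_const_mul, ← hc,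
      inv_mul_cancel₀ hcpos.ne']
  · have hq2_int : IntervalIntegrable (fun t => (c ^ (-(1/γ)) * y t ^ f) * y t ^ 2) volume 0 1 := by
      apply ContinuousOn.intervalIntegrable
      rw [h01]
      exact ((continuousOn_const.mul (hcr f)).mul (hcont.pow 2))
    rw [intervalIntegral.integral_add hi2 hq2_int]
    congr 1
    rw [intervalIntegral.integral_congr (g := fun t => c ^ (-(1/γ)) * y t ^ e)
      (fun t ht => key2 t (h01 ▸ ht)), intervalIntegral.integral_const_mul, ← hc]
    nth_rewrite 2 [show c = c ^ (1:ℝ) from (rpow_one c).symm]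
    rw [← rpow_add hcpos]
    congr 1
    field_simp
    ring

/-- For `γ ∈ (0,1)` and uniformly positive `y ∈ W¹₂[0,1]`, the potential
`q* := (∫₀¹ y^{2γ/(γ−1)} dx)^{−1/γ} · y^{2/(γ−1)}` belongs to `A_γ` and its
Rayleigh numerator at `y` equals `J_γ(y)`. -/
theorem qstar_mem_and_rayleigh (γ : ℝ) (hγ : γ ∈ Ioo (0:ℝ) 1)
    (p : (ℝ → ℝ) × (ℝ → ℝ)) (hp : p ∈ Mset) :
    (fun t => (∫ s in (0:ℝ)..1, (p.1 s) ^ (2 * γ / (γ - 1))) ^ (-(1 / γ)) *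
        (p.1 t) ^ (2 / (γ - 1))) ∈ Agamma γ ∧
    (∫ t in (0:ℝ)..1, ((p.2 t) ^ 2 +
        ((∫ s in (0:ℝ)..1, (p.1 s) ^ (2 * γ / (γ - 1))) ^ (-(1 / γ)) *
          (p.1 t) ^ (2 / (γ - 1))) * (p.1 t) ^ 2)) = Jg γ p := by
  obtain ⟨⟨hy, hi, hi2⟩, ζ, hζ, hlb⟩ := hp
  obtain ⟨⟨a1, a2, a3⟩, b⟩ := qstar_aux γ hγ p.1 p.2 hy hi hi2 ζ hζ hlb
  exact ⟨⟨a1, a2, a3⟩, b⟩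
end
end

section
/- Let γ ∈ (0,1), let ε ∈ (0,1), and let y ∈ M satisfy G_γ(y) < (π²/4)·(1−ε)². Then for every x ∈ [0,1] one has y(x) > ε·‖y‖_{L²[0,1]}. -/
open MeasureTheory Set Real

noncomputable section

/-!
Write `y = y(x₀) + g` with `g x = ∫_{x₀}^x y'`. By Minkowski `‖y‖ ≤ y(x₀) + ‖g‖`, and the
second summand of `J_γ` is nonnegative, so it suffices that
`‖g‖² ≤ (4/π²) ∫ (y')² < (1-ε)² ‖y‖²`. This is the sharp Hardy-type inequality
`∫_a^b (∫_a^x f)² ≤ k⁻² ∫_a^b f²` for `k (b - a) ≤ π/2`, used with `k = π/2` on `[0, x₀]` and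
`[x₀, 1]`. It follows from Cauchy–Schwarz with the weight `cos (k (t - a))`,
`(∫_a^x f)² ≤ (sin (k (x - a)) / k) ∫_a^x f² / cos (k (t - a))`, integrated in `x` with Tonelli,
since `∫_t^b sin (k (x - a)) / k dx ≤ cos (k (t - a)) / k²`.
-/

open scoped ENNReal

theorem setLIntegral_mul_setLIntegral_Iic_swap {μ : Measure ℝ} [SFinite μ] {s : Set ℝ}
    {φ ψ : ℝ → ℝ≥0∞} (hφ : AEMeasurable φ (μ.restrict s)) (hψ : AEMeasurable ψ (μ.restrict s)) :
    ∫⁻ x in s, φ x * ∫⁻ t in s ∩ Iic x, ψ t ∂μ ∂μ =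
      ∫⁻ t in s, ψ t * ∫⁻ x in s ∩ Ici t, φ x ∂μ ∂μ := by
  have hK : AEMeasurable (Function.uncurry fun x t => φ x * (Iic x).indicator ψ t)
      ((μ.restrict s).prod (μ.restrict s)) :=
    hφ.comp_fst.mul ((hψ.comp_snd).indicator (measurableSet_le measurable_snd measurable_fst))
  calc ∫⁻ x in s, φ x * ∫⁻ t in s ∩ Iic x, ψ t ∂μ ∂μ
      = ∫⁻ x in s, ∫⁻ t in s, φ x * (Iic x).indicator ψ t ∂μ ∂μ := by
        refine lintegral_congr fun x => ?_
        rw [lintegral_const_mul'' _ (hψ.indicator measurableSet_Iic),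
          lintegral_indicator measurableSet_Iic, Measure.restrict_restrict measurableSet_Iic,
          inter_comm]
    _ = ∫⁻ t in s, ∫⁻ x in s, φ x * (Iic x).indicator ψ t ∂μ ∂μ := lintegral_lintegral_swap hK
    _ = ∫⁻ t in s, ψ t * ∫⁻ x in s ∩ Ici t, φ x ∂μ ∂μ := by
        refine lintegral_congr fun t => ?_
        have hswap : ∀ x, φ x * (Iic x).indicator ψ t = ψ t * (Ici t).indicator φ x := by
          intro x
          by_cases htx : t ≤ x <;> simp [htx, mul_comm]
        simp_rw [hswap]
        rw [lintegral_const_mul'' _ (hφ.indicator measurableSet_Ici),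
          lintegral_indicator measurableSet_Ici, Measure.restrict_restrict measurableSet_Ici,
          inter_comm]

theorem sq_lintegral_le_lintegral_mul_lintegral_sq_div {α : Type*} [MeasurableSpace α]
    {μ : Measure α} {f w : α → ℝ≥0∞} (hf : AEMeasurable f μ) (hw : AEMeasurable w μ)
    (hw0 : ∀ᵐ x ∂μ, w x ≠ 0) (hwtop : ∀ᵐ x ∂μ, w x ≠ ∞) :
    (∫⁻ x, f x ∂μ) ^ 2 ≤ (∫⁻ x, w x ∂μ) * ∫⁻ x, f x ^ 2 / w x ∂μ := by
  set u : α → ℝ≥0∞ := fun x => w x ^ (2⁻¹ : ℝ)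
  have hu : AEMeasurable u μ := hw.pow_const _
  have hfu : AEMeasurable (fun x => f x / u x) μ := hf.div hu
  have hsq : ∀ z : ℝ≥0∞, z ^ (2 : ℝ) = z ^ 2 := fun z => by
    rw [← ENNReal.rpow_natCast]; norm_num
  have hu2 : ∀ x, u x ^ 2 = w x := fun x => by
    rw [← hsq, ← ENNReal.rpow_mul]; norm_num
  have hholder := ENNReal.lintegral_mul_le_Lp_mul_Lq μ Real.HolderConjugate.two_two hu hfu
  have hprod : (fun x => f x) =ᵐ[μ] (fun x => u x * (f x / u x)) := by
    filter_upwards [hw0, hwtop] with x h0 htop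
    rw [ENNReal.mul_div_cancel (by simpa [u] using h0) (by simpa [u] using htop)]
  have hsq_div : ∀ x, (f x / u x) ^ 2 = f x ^ 2 / w x := fun x => by
    rw [div_eq_mul_inv, mul_pow, ← ENNReal.inv_pow, hu2, ← div_eq_mul_inv]
  have hhalf : ∀ z : ℝ≥0∞, (z ^ (1 / (2 : ℝ))) ^ 2 = z := fun z => by
    rw [← hsq, ← ENNReal.rpow_mul]; norm_num
  calc (∫⁻ x, f x ∂μ) ^ 2 = (∫⁻ x, (u * fun x => f x / u x) x ∂μ) ^ 2 := by
        rw [lintegral_congr_ae hprod]; rfl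
    _ ≤ ((∫⁻ x, u x ^ (2 : ℝ) ∂μ) ^ (1 / (2 : ℝ)) *
          (∫⁻ x, (f x / u x) ^ (2 : ℝ) ∂μ) ^ (1 / (2 : ℝ))) ^ 2 := pow_le_pow_left' hholder 2
    _ = (∫⁻ x, w x ∂μ) * ∫⁻ x, f x ^ 2 / w x ∂μ := by
        simp only [hsq, hu2, hsq_div, mul_pow, hhalf]

theorem ofReal_sq_integral_le_integral_mul_lintegral {α : Type*} [MeasurableSpace α] {μ : Measure α}
    {f w : α → ℝ} (hf : Integrable f μ) (hw : Integrable w μ) (hw_pos : ∀ᵐ x ∂μ, 0 < w x) :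
    ENNReal.ofReal ((∫ x, f x ∂μ) ^ 2) ≤
      ENNReal.ofReal (∫ x, w x ∂μ) * ∫⁻ x, ENNReal.ofReal (f x ^ 2 / w x) ∂μ := by
  have hw_nonneg : 0 ≤ᵐ[μ] w := hw_pos.mono fun _ hx => hx.le
  calc ENNReal.ofReal ((∫ x, f x ∂μ) ^ 2) ≤ ENNReal.ofReal ((∫ x, |f x| ∂μ) ^ 2) := by
        refine ENNReal.ofReal_le_ofReal ?_
        rw [← sq_abs]
        exact pow_le_pow_left₀ (abs_nonneg _) abs_integral_le_integral_abs 2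
    _ = (∫⁻ x, ENNReal.ofReal |f x| ∂μ) ^ 2 := by
        rw [ENNReal.ofReal_pow (integral_nonneg fun _ => abs_nonneg _),
          ofReal_integral_eq_lintegral_ofReal hf.abs (ae_of_all _ fun _ => abs_nonneg _)]
    _ ≤ (∫⁻ x, ENNReal.ofReal (w x) ∂μ) *
          ∫⁻ x, ENNReal.ofReal |f x| ^ 2 / ENNReal.ofReal (w x) ∂μ :=
        sq_lintegral_le_lintegral_mul_lintegral_sq_div hf.abs.aemeasurable.ennreal_ofReal
          hw.aemeasurable.ennreal_ofReal (hw_pos.mono fun _ hx => by simpa using hx)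
          (ae_of_all _ fun _ => ENNReal.ofReal_ne_top)
    _ = ENNReal.ofReal (∫ x, w x ∂μ) * ∫⁻ x, ENNReal.ofReal (f x ^ 2 / w x) ∂μ := by
        rw [ofReal_integral_eq_lintegral_ofReal hw hw_nonneg]
        congr 1
        refine lintegral_congr_ae (hw_pos.mono fun x hx => ?_)
        dsimp only
        rw [← ENNReal.ofReal_pow (abs_nonneg _), sq_abs, ENNReal.ofReal_div_of_pos hx]

section
variable {f : ℝ → ℝ} {a b k : ℝ}

theorem integral_cos_mul_sub (hk : k ≠ 0) (x : ℝ) :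
    ∫ t in a..x, cos (k * (t - a)) = sin (k * (x - a)) / k := by
  have hderiv : ∀ t, HasDerivAt (fun x => sin (k * (x - a)) / k) (cos (k * (t - a))) t := by
    intro t
    refine ((((hasDerivAt_id t).sub_const a).const_mul k).sin.div_const k).congr_deriv ?_
    simp only [id]; field_simp
  rw [intervalIntegral.integral_eq_sub_of_hasDerivAt (fun t _ => hderiv t)
    ((by fun_prop : Continuous fun t => cos (k * (t - a))).intervalIntegrable _ _)]
  simp

theorem integral_sin_mul_sub_div (hk : k ≠ 0) (s t : ℝ) :
    ∫ x in s..t, sin (k * (x - a)) / k = (cos (k * (s - a)) - cos (k * (t - a))) / k ^ 2 := by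
  have hderiv : ∀ x,
      HasDerivAt (fun x => -cos (k * (x - a)) / k ^ 2) (sin (k * (x - a)) / k) x := by
    intro x
    refine ((((hasDerivAt_id x).sub_const a).const_mul k).cos.neg.div_const (k ^ 2)).congr_deriv ?_
    simp only [id]; field_simp
  rw [intervalIntegral.integral_eq_sub_of_hasDerivAt (fun x _ => hderiv x)
    ((by fun_prop : Continuous fun x => sin (k * (x - a)) / k).intervalIntegrable _ _)]
  ring

theorem ofReal_sq_integral_le_sin_mul_lintegral (hk : 0 < k) (hkab : k * (b - a) ≤ π / 2)
    (hf : IntervalIntegrable f volume a b) {x : ℝ} (hx : x ∈ Icc a b) :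
    ENNReal.ofReal ((∫ t in a..x, f t) ^ 2) ≤
      ENNReal.ofReal (sin (k * (x - a)) / k) *
        ∫⁻ t in Ioc a x, ENNReal.ofReal (f t ^ 2 / cos (k * (t - a))) := by
  have hcos_pos : ∀ᵐ t ∂volume.restrict (Ioc a x), 0 < cos (k * (t - a)) := by
    refine ae_restrict_of_ae_eq_of_ae_restrict Ioo_ae_eq_Ioc ?_
    refine (ae_restrict_iff' measurableSet_Ioo).mpr (ae_of_all _ fun t ht => ?_)
    apply cos_pos_of_mem_Ioo
    constructor <;> nlinarith [ht.1, ht.2, hx.2, pi_pos]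
  rw [← integral_cos_mul_sub hk.ne', intervalIntegral.integral_of_le hx.1,
    intervalIntegral.integral_of_le hx.1]
  exact ofReal_sq_integral_le_integral_mul_lintegral (hf.1.mono_set (Ioc_subset_Ioc_right hx.2))
    (by fun_prop : Continuous fun t => cos (k * (t - a))).integrableOn_Ioc hcos_pos

theorem ofReal_div_cos_mul_lintegral_sin_le (hk : 0 < k) (hkab : k * (b - a) ≤ π / 2)
    {t : ℝ} (ht : t ∈ Icc a b) {s : ℝ} (hs : 0 ≤ s) :
    ENNReal.ofReal (s / cos (k * (t - a))) *
        ∫⁻ x in Icc t b, ENNReal.ofReal (sin (k * (x - a)) / k) ≤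
      ENNReal.ofReal ((k ^ 2)⁻¹ * s) := by
  have hcos_nonneg : ∀ x ∈ Icc a b, 0 ≤ cos (k * (x - a)) := fun x hx =>
    cos_nonneg_of_mem_Icc ⟨by nlinarith [hx.1, pi_pos], by nlinarith [hx.2]⟩
  have hcos_anti : cos (k * (b - a)) ≤ cos (k * (t - a)) :=
    cos_le_cos_of_nonneg_of_le_pi (by nlinarith [ht.1]) (by linarith [pi_pos])
      (by nlinarith [ht.2])
  have hsin_nonneg : ∀ x ∈ Ioc t b, 0 ≤ sin (k * (x - a)) / k := fun x hx =>
    div_nonneg (sin_nonneg_of_nonneg_of_le_pi (by nlinarith [ht.1, hx.1])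
      (by nlinarith [hx.2, pi_pos])) hk.le
  have hct := hcos_nonneg t ht
  have hcb := hcos_nonneg b ⟨ht.1.trans ht.2, le_rfl⟩
  rw [setLIntegral_congr Ioc_ae_eq_Icc.symm, ← ofReal_integral_eq_lintegral_ofReal
      (by fun_prop : Continuous fun x => sin (k * (x - a)) / k).integrableOn_Ioc
      ((ae_restrict_iff' measurableSet_Ioc).mpr (ae_of_all _ hsin_nonneg)),
    ← intervalIntegral.integral_of_le ht.2, integral_sin_mul_sub_div hk.ne',
    ← ENNReal.ofReal_mul (div_nonneg hs hct)]
  refine ENNReal.ofReal_le_ofReal ?_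
  -- the cosine may vanish at `t = b`, where `s / 0 = 0`
  have hcancel : s / cos (k * (t - a)) * cos (k * (t - a)) ≤ s := by
    rcases hct.eq_or_lt with h | h
    · simp [← h, hs]
    · rw [div_mul_cancel₀ _ h.ne']
  calc s / cos (k * (t - a)) * ((cos (k * (t - a)) - cos (k * (b - a))) / k ^ 2)
      ≤ s / cos (k * (t - a)) * (cos (k * (t - a)) / k ^ 2) := by gcongr; linarith
    _ ≤ (k ^ 2)⁻¹ * s := by rw [mul_div_assoc', div_eq_inv_mul]; gcongr

theorem integral_sq_integral_left_le (hk : 0 < k) (hab : a ≤ b) (hkab : k * (b - a) ≤ π / 2)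
    (hf : IntervalIntegrable f volume a b)
    (hf2 : IntervalIntegrable (fun t => f t ^ 2) volume a b) :
    ∫ x in a..b, (∫ t in a..x, f t) ^ 2 ≤ (k ^ 2)⁻¹ * ∫ t in a..b, f t ^ 2 := by
  have hprimitive_sq : ContinuousOn (fun x => (∫ t in a..x, f t) ^ 2) (Icc a b) := by
    have hprimitive := intervalIntegral.continuousOn_primitive_interval' hf left_mem_uIcc
    rw [uIcc_of_le hab] at hprimitive
    exact hprimitive.pow 2
  have hweight : AEMeasurable (fun t => ENNReal.ofReal (f t ^ 2 / cos (k * (t - a))))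
      (volume.restrict (Ioc a b)) :=
    (hf2.1.aemeasurable.div (by fun_prop : Continuous fun t => cos (k * (t - a))).aemeasurable)
      |>.ennreal_ofReal
  rw [← ENNReal.ofReal_le_ofReal_iff (mul_nonneg (by positivity)
      (intervalIntegral.integral_nonneg hab fun _ _ => sq_nonneg _)),
    ← intervalIntegral.integral_const_mul, intervalIntegral.integral_of_le hab,
    intervalIntegral.integral_of_le hab,
    ofReal_integral_eq_lintegral_ofReal
      (hprimitive_sq.integrableOn_Icc.mono_set Ioc_subset_Icc_self)
      (ae_of_all _ fun _ => sq_nonneg _),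
    ofReal_integral_eq_lintegral_ofReal (hf2.1.const_mul _)
      (ae_of_all _ fun _ => by positivity)]
  calc ∫⁻ x in Ioc a b, ENNReal.ofReal ((∫ t in a..x, f t) ^ 2)
      ≤ ∫⁻ x in Ioc a b, ENNReal.ofReal (sin (k * (x - a)) / k) *
          ∫⁻ t in Ioc a b ∩ Iic x, ENNReal.ofReal (f t ^ 2 / cos (k * (t - a))) := by
        refine setLIntegral_mono' measurableSet_Ioc fun x hx => ?_
        rw [Ioc_inter_Iic, inf_eq_right.mpr hx.2]
        exact ofReal_sq_integral_le_sin_mul_lintegral hk hkab hf (Ioc_subset_Icc_self hx)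
    _ = ∫⁻ t in Ioc a b, ENNReal.ofReal (f t ^ 2 / cos (k * (t - a))) *
          ∫⁻ x in Ioc a b ∩ Ici t, ENNReal.ofReal (sin (k * (x - a)) / k) :=
        setLIntegral_mul_setLIntegral_Iic_swap
          (by fun_prop : Continuous fun x => sin (k * (x - a)) / k).aemeasurable.ennreal_ofReal
          hweight
    _ ≤ ∫⁻ t in Ioc a b, ENNReal.ofReal ((k ^ 2)⁻¹ * f t ^ 2) := by
        refine setLIntegral_mono' measurableSet_Ioc fun t ht => ?_
        have hcol : Ioc a b ∩ Ici t = Icc t b := by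
          ext x
          simp only [mem_inter_iff, mem_Ioc, mem_Ici, mem_Icc]
          exact ⟨fun hx => ⟨hx.2, hx.1.2⟩, fun hx => ⟨⟨ht.1.trans_le hx.1, hx.2⟩, hx.1⟩⟩
        rw [hcol]
        exact ofReal_div_cos_mul_lintegral_sin_le hk hkab (Ioc_subset_Icc_self ht) (sq_nonneg _)

theorem integral_sq_integral_right_le (hk : 0 < k) (hab : a ≤ b) (hkab : k * (b - a) ≤ π / 2)
    (hf : IntervalIntegrable f volume a b)
    (hf2 : IntervalIntegrable (fun t => f t ^ 2) volume a b) :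
    ∫ x in a..b, (∫ t in x..b, f t) ^ 2 ≤ (k ^ 2)⁻¹ * ∫ t in a..b, f t ^ 2 := by
  have hreflect := integral_sq_integral_left_le (f := fun t => f (a + b - t)) hk hab hkab
    (by simpa using (hf.comp_sub_left (a + b)).symm)
    (by simpa using (hf2.comp_sub_left (a + b)).symm)
  have hinner : ∀ x, ∫ t in a..x, f (a + b - t) = ∫ t in a + b - x..b, f t := fun x => by
    rw [intervalIntegral.integral_comp_sub_left f (a + b)]; ring_nf
  simp_rw [hinner] at hreflect
  rwa [intervalIntegral.integral_comp_sub_left (fun x => (∫ t in x..b, f t) ^ 2) (a + b),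
    intervalIntegral.integral_comp_sub_left (fun t => f t ^ 2) (a + b), add_sub_cancel_right,
    add_sub_cancel_left] at hreflect

theorem integral_sq_integral_le {x₀ : ℝ} (hk : 0 < k) (hx₀ : x₀ ∈ Icc a b)
    (hka : k * (x₀ - a) ≤ π / 2) (hkb : k * (b - x₀) ≤ π / 2)
    (hf : IntervalIntegrable f volume a b)
    (hf2 : IntervalIntegrable (fun t => f t ^ 2) volume a b) :
    ∫ x in a..b, (∫ t in x₀..x, f t) ^ 2 ≤ (k ^ 2)⁻¹ * ∫ t in a..b, f t ^ 2 := by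
  have hleft_sub : uIcc a x₀ ⊆ uIcc a b := uIcc_subset_uIcc_left (mem_uIcc_of_le hx₀.1 hx₀.2)
  have hright_sub : uIcc x₀ b ⊆ uIcc a b := uIcc_subset_uIcc_right (mem_uIcc_of_le hx₀.1 hx₀.2)
  have hsq : IntervalIntegrable (fun x => (∫ t in x₀..x, f t) ^ 2) volume a b :=
    ((intervalIntegral.continuousOn_primitive_interval' hf
      (mem_uIcc_of_le hx₀.1 hx₀.2)).pow 2).intervalIntegrable
  have hleft := integral_sq_integral_right_le hk hx₀.1 hka (hf.mono_set hleft_sub)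
    (hf2.mono_set hleft_sub)
  have hright := integral_sq_integral_left_le hk hx₀.2 hkb (hf.mono_set hright_sub)
    (hf2.mono_set hright_sub)
  simp_rw [← neg_sq (∫ t in _..x₀, f t), ← intervalIntegral.integral_symm] at hleft
  rw [← intervalIntegral.integral_add_adjacent_intervals (b := x₀) (hsq.mono_set hleft_sub)
      (hsq.mono_set hright_sub),
    ← intervalIntegral.integral_add_adjacent_intervals (b := x₀) (hf2.mono_set hleft_sub)
      (hf2.mono_set hright_sub)]
  linarith

end

theorem sq_integral_le_integral_sq_unitInterval {g : ℝ → ℝ}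
    (hg : IntervalIntegrable g volume 0 1)
    (hg2 : IntervalIntegrable (fun x => g x ^ 2) volume 0 1) :
    (∫ x in (0:ℝ)..1, g x) ^ 2 ≤ ∫ x in (0:ℝ)..1, g x ^ 2 := by
  have : IsProbabilityMeasure (volume.restrict (Ioc (0:ℝ) 1)) := ⟨by simp⟩
  simp only [intervalIntegral.integral_of_le zero_le_one]
  exact (even_two.convexOn_pow (𝕜 := ℝ)).map_integral_le (continuous_pow 2).continuousOn
    isClosed_univ (ae_of_all _ fun _ => mem_univ _) hg.1 hg2.1

theorem sqrt_integral_sq_const_add_le {K : ℝ} {g : ℝ → ℝ} (hK : 0 ≤ K)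
    (hg : IntervalIntegrable g volume 0 1)
    (hg2 : IntervalIntegrable (fun x => g x ^ 2) volume 0 1) :
    √(∫ x in (0:ℝ)..1, (K + g x) ^ 2) ≤ K + √(∫ x in (0:ℝ)..1, g x ^ 2) := by
  have hexpand : ∫ x in (0:ℝ)..1, (K + g x) ^ 2 =
      K ^ 2 + 2 * K * (∫ x in (0:ℝ)..1, g x) + ∫ x in (0:ℝ)..1, g x ^ 2 := by
    rw [intervalIntegral.integral_congr (g := fun x => K ^ 2 + 2 * K * g x + g x ^ 2)
        fun x _ => by ring,
      intervalIntegral.integral_add (intervalIntegrable_const.add (hg.const_mul _)) hg2,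
      intervalIntegral.integral_add intervalIntegrable_const (hg.const_mul _),
      intervalIntegral.integral_const_mul]
    simp
  have hmean : ∫ x in (0:ℝ)..1, g x ≤ √(∫ x in (0:ℝ)..1, g x ^ 2) :=
    Real.le_sqrt_of_sq_le (sq_integral_le_integral_sq_unitInterval hg hg2)
  have hB : √(∫ x in (0:ℝ)..1, g x ^ 2) ^ 2 = ∫ x in (0:ℝ)..1, g x ^ 2 :=
    Real.sq_sqrt (intervalIntegral.integral_nonneg zero_le_one fun x _ => sq_nonneg (g x))
  rw [Real.sqrt_le_left (by positivity), hexpand]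
  nlinarith

theorem apply_eq_add_integral_of_mem_W12 {p : (ℝ → ℝ) × (ℝ → ℝ)} (hp : p ∈ W12) {x₀ x : ℝ}
    (hx₀ : x₀ ∈ Icc (0:ℝ) 1) (hx : x ∈ Icc (0:ℝ) 1) :
    p.1 x = p.1 x₀ + ∫ t in x₀..x, p.2 t := by
  have hsub : ∀ {z : ℝ}, z ∈ Icc (0:ℝ) 1 → uIcc 0 z ⊆ uIcc 0 1 := fun hz =>
    uIcc_subset_uIcc_left (by rwa [uIcc_of_le zero_le_one])
  rw [hp.1 x hx, hp.1 x₀ hx₀, ← intervalIntegral.integral_interval_sub_left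
    (hp.2.1.mono_set (hsub hx)) (hp.2.1.mono_set (hsub hx₀))]
  ring

theorem sqrt_integral_sq_le_apply_add {p : (ℝ → ℝ) × (ℝ → ℝ)} (hp : p ∈ W12) {x₀ : ℝ}
    (hx₀ : x₀ ∈ Icc (0:ℝ) 1) (hy : 0 ≤ p.1 x₀) :
    √(∫ t in (0:ℝ)..1, p.1 t ^ 2) ≤ p.1 x₀ + √(∫ x in (0:ℝ)..1, (∫ t in x₀..x, p.2 t) ^ 2) := by
  have hg := intervalIntegral.continuousOn_primitive_interval' hp.2.1
    (by rwa [uIcc_of_le zero_le_one] : x₀ ∈ uIcc (0:ℝ) 1)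
  have hy_eq : ∀ x ∈ uIcc (0:ℝ) 1, p.1 x ^ 2 = (p.1 x₀ + ∫ t in x₀..x, p.2 t) ^ 2 :=
    fun x hx => by
      rw [← apply_eq_add_integral_of_mem_W12 hp hx₀ (by rwa [← uIcc_of_le zero_le_one])]
  rw [intervalIntegral.integral_congr hy_eq]
  exact sqrt_integral_sq_const_add_le hy hg.intervalIntegrable (hg.pow 2).intervalIntegrable

theorem integral_sq_snd_lt_of_Gg_lt {γ c : ℝ} {p : (ℝ → ℝ) × (ℝ → ℝ)}
    (hp : ∀ x ∈ Icc (0:ℝ) 1, 0 ≤ p.1 x) (hD : 0 < ∫ t in (0:ℝ)..1, p.1 t ^ 2)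
    (h : Gg γ p < c) : ∫ t in (0:ℝ)..1, p.2 t ^ 2 < c * ∫ t in (0:ℝ)..1, p.1 t ^ 2 := by
  rw [Gg, div_lt_iff₀ hD] at h
  refine lt_of_le_of_lt (le_add_of_nonneg_right ?_) h
  exact rpow_nonneg (intervalIntegral.integral_nonneg zero_le_one
    fun t ht => rpow_nonneg (hp t ht) _) _

theorem mul_sqrt_lt_of_sqrt_le_add_sqrt {ε K B D : ℝ} (hε : ε < 1) (hB : 0 ≤ B)
    (hBD : B < (1 - ε) ^ 2 * D) (h : √D ≤ K + √B) : ε * √D < K := by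
  have hB_lt : √B < (1 - ε) * √D := by
    rw [← sqrt_sq (sub_nonneg.2 hε.le), ← sqrt_mul (sq_nonneg _)]
    exact sqrt_lt_sqrt hB hBD
  linarith

theorem pointwise_lower_bound_general (γ : ℝ)
    (ε : ℝ) (hε : ε ∈ Ioo (0:ℝ) 1)
    (p : (ℝ → ℝ) × (ℝ → ℝ)) (hp : p ∈ Mset)
    (h : Gg γ p < π ^ 2 / 4 * (1 - ε) ^ 2) :
    ∀ x ∈ Icc (0:ℝ) 1,
      ε * Real.sqrt (∫ t in (0:ℝ)..1, (p.1 t) ^ 2) < p.1 x := by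
  obtain ⟨hW, ζ, hζ, hζy⟩ := hp
  intro x₀ hx₀
  have hy_pos : 0 < p.1 x₀ := hζ.trans_le (hζy x₀ hx₀)
  rcases (intervalIntegral.integral_nonneg zero_le_one fun t _ => sq_nonneg (p.1 t)).eq_or_lt
    with hD | hD
  · rwa [← hD, Real.sqrt_zero, mul_zero]
  refine mul_sqrt_lt_of_sqrt_le_add_sqrt hε.2
    (intervalIntegral.integral_nonneg zero_le_one fun _ _ => sq_nonneg _) ?_
    (sqrt_integral_sq_le_apply_add hW hx₀ hy_pos.le)
  calc _ ≤ ((π / 2) ^ 2)⁻¹ * ∫ t in (0:ℝ)..1, p.2 t ^ 2 :=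
        integral_sq_integral_le (by positivity) hx₀ (by nlinarith [hx₀.2, pi_pos])
          (by nlinarith [hx₀.1, pi_pos]) hW.2.1 hW.2.2
    _ < ((π / 2) ^ 2)⁻¹ * (π ^ 2 / 4 * (1 - ε) ^ 2 * ∫ t in (0:ℝ)..1, p.1 t ^ 2) := by
        gcongr
        exact integral_sq_snd_lt_of_Gg_lt (fun x hx => hζ.le.trans (hζy x hx)) hD h
    _ = (1 - ε) ^ 2 * ∫ t in (0:ℝ)..1, p.1 t ^ 2 := by field_simp; ring

/-- If `y ∈ M` satisfies `G_γ(y) < (π²/4)(1−ε)²` for some `ε ∈ (0,1)`, then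
`y(x) > ε‖y‖_{L²[0,1]}` for every `x ∈ [0,1]`. -/
theorem pointwise_lower_bound (γ : ℝ) (hγ : γ ∈ Ioo (0:ℝ) 1)
    (ε : ℝ) (hε : ε ∈ Ioo (0:ℝ) 1)
    (p : (ℝ → ℝ) × (ℝ → ℝ)) (hp : p ∈ Mset)
    (h : Gg γ p < π ^ 2 / 4 * (1 - ε) ^ 2) :
    ∀ x ∈ Icc (0:ℝ) 1,
      ε * Real.sqrt (∫ t in (0:ℝ)..1, (p.1 t) ^ 2) < p.1 x :=
  pointwise_lower_bound_general γ ε hε p hp h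
end
end

section
/- For every γ ∈ (1 − 2π⁻², 1) there exists a function v of Sobolev class W¹₂[0,1] such that ∫₀¹ (v')² dx + (2/(1−γ)) · ((∫₀¹ v dx)² − ∫₀¹ v² dx) < 0; equivalently, the quadratic form of the second differential of G_γ at the constant function ŷ ≡ 1 is not nonnegative definite. -/
open MeasureTheory Set Real

noncomputable section

/-! Take `v = cos (π x)`. It has mean zero on `[0,1]`, `∫ v² = 1/2` and `∫ (v')² = π²/2`, so the
form equals `π²/2 - 1/(1-γ)`, which is negative exactly when `1 - γ < 2/π²`. -/

theorem mem_W12_of_hasDerivAt {f f' : ℝ → ℝ} (hf : ∀ x, HasDerivAt f (f' x) x)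
    (hf' : Continuous f') : (f, f') ∈ W12 := by
  refine ⟨fun x _ => ?_, hf'.intervalIntegrable 0 1, (hf'.pow 2).intervalIntegrable 0 1⟩
  rw [intervalIntegral.integral_eq_sub_of_hasDerivAt (fun t _ => hf t) (hf'.intervalIntegrable 0 x)]
  ring

theorem hasDerivAt_cos_pi_mul (x : ℝ) :
    HasDerivAt (fun x => cos (π * x)) (-π * sin (π * x)) x := by
  simpa [mul_comm] using ((hasDerivAt_id x).const_mul π).cos

theorem integral_cos_pi_mul : ∫ t in (0:ℝ)..1, cos (π * t) = 0 := by
  simp [intervalIntegral.integral_comp_mul_left (fun u => cos u) pi_ne_zero]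

theorem integral_cos_pi_mul_sq : ∫ t in (0:ℝ)..1, cos (π * t) ^ 2 = 1 / 2 := by
  rw [intervalIntegral.integral_comp_mul_left (fun u => cos u ^ 2) pi_ne_zero, integral_cos_sq]
  simp [field]

theorem integral_deriv_cos_pi_mul_sq :
    ∫ t in (0:ℝ)..1, (-π * sin (π * t)) ^ 2 = π ^ 2 / 2 := by
  simp_rw [mul_pow, neg_sq]
  rw [intervalIntegral.integral_const_mul,
    intervalIntegral.integral_comp_mul_left (fun u => sin u ^ 2) pi_ne_zero, integral_sin_sq]
  simp [field]

/-- For `γ ∈ (1 − 2π⁻², 1)` the quadratic form of the second differential of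
`G_γ` at `ŷ ≡ 1` is not nonnegative definite: some `v ∈ W¹₂[0,1]` satisfies
`∫₀¹ (v')² dx + (2/(1−γ))((∫₀¹ v dx)² − ∫₀¹ v² dx) < 0`. -/
theorem second_differential_indefinite (γ : ℝ)
    (hγ : γ ∈ Ioo (1 - 2 / π ^ 2) 1) :
    ∃ p ∈ W12,
      (∫ t in (0:ℝ)..1, (p.2 t) ^ 2) +
        2 / (1 - γ) * ((∫ t in (0:ℝ)..1, p.1 t) ^ 2 -
          ∫ t in (0:ℝ)..1, (p.1 t) ^ 2) < 0 := by
  obtain ⟨hlo, hhi⟩ := hγ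
  have hpos : 0 < 1 - γ := sub_pos.2 hhi
  have hsmall : π ^ 2 * (1 - γ) < 2 := by
    rw [sub_lt_comm, lt_div_iff₀ (by positivity)] at hlo
    linarith
  refine ⟨_, mem_W12_of_hasDerivAt hasDerivAt_cos_pi_mul (by fun_prop), ?_⟩
  simp only [integral_cos_pi_mul, integral_cos_pi_mul_sq, integral_deriv_cos_pi_mul_sq]
  have hform : π ^ 2 / 2 + 2 / (1 - γ) * ((0:ℝ) ^ 2 - 1 / 2)
      = (π ^ 2 * (1 - γ) - 2) / (2 * (1 - γ)) := by
    field_simp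
    ring
  rw [hform]
  exact div_neg_of_neg_of_pos (by linarith) (by positivity)
end
end

section
/- Let γ ∈ (0,1) and α > 0, and define f_α(t) := α t^{2γ} − t² − 1 for t ∈ (0,∞). Then the set {t ∈ (0,∞) : f_α(t) > 0} is nonempty if and only if α > γ^{−γ} (1−γ)^{γ−1}. -/
open Set Real

/-! Weighted AM-GM with weights `γ, 1 - γ` applied to `x / γ` and `1 / (1 - γ)` gives
`γ^{-γ} (1-γ)^{γ-1} x^γ ≤ x + 1` for all `x ≥ 0`, with equality at `x = γ / (1 - γ)`;
substitute `x = t²`. -/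

noncomputable def criticalCoeff (γ : ℝ) : ℝ := γ ^ (-γ) * (1 - γ) ^ (γ - 1)

section

variable {γ : ℝ} (hγ0 : 0 < γ) (hγ1 : γ < 1)
include hγ0 hγ1

lemma criticalCoeff_mul_rpow_le_add_one {x : ℝ} (hx : 0 ≤ x) :
    criticalCoeff γ * x ^ γ ≤ x + 1 := by
  have h1γ : 0 < 1 - γ := sub_pos.2 hγ1
  calc criticalCoeff γ * x ^ γ = (x / γ) ^ γ * (1 - γ)⁻¹ ^ (1 - γ) := by
        rw [criticalCoeff, div_rpow hx hγ0.le, inv_rpow h1γ.le, ← rpow_neg h1γ.le, neg_sub,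
          rpow_neg hγ0.le]
        ring
    _ ≤ γ * (x / γ) + (1 - γ) * (1 - γ)⁻¹ :=
        geom_mean_le_arith_mean2_weighted hγ0.le h1γ.le (div_nonneg hx hγ0.le)
          (inv_nonneg.2 h1γ.le) (add_sub_cancel γ 1)
    _ = x + 1 := by field_simp

lemma criticalCoeff_mul_rpow_eq_add_one :
    criticalCoeff γ * (γ / (1 - γ)) ^ γ = γ / (1 - γ) + 1 := by
  have h1γ : 0 < 1 - γ := sub_pos.2 hγ1
  calc criticalCoeff γ * (γ / (1 - γ)) ^ γ
        = (γ ^ (-γ) * γ ^ γ) * ((1 - γ) ^ (γ - 1) * (1 - γ) ^ (-γ)) := by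
          rw [criticalCoeff, div_rpow hγ0.le h1γ.le, rpow_neg h1γ.le γ]
          ring
    _ = (1 - γ)⁻¹ := by
          rw [← rpow_add hγ0, ← rpow_add h1γ, neg_add_cancel, rpow_zero, sub_add_eq_add_sub,
            add_neg_cancel, zero_sub, rpow_neg_one, one_mul]
    _ = γ / (1 - γ) + 1 := by field_simp; ring

end

lemma rpow_two_mul {t : ℝ} (ht : 0 ≤ t) (y : ℝ) : t ^ (2 * y) = (t ^ 2) ^ y := by
  rw [rpow_mul ht, rpow_two]

theorem fA_pos_set_nonempty_iff_general (γ α : ℝ) (hγ : γ ∈ Ioo (0:ℝ) 1) :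
    {t : ℝ | 0 < t ∧ 0 < α * t ^ (2 * γ) - t ^ 2 - 1}.Nonempty ↔
      γ ^ (-γ) * (1 - γ) ^ (γ - 1) < α := by
  obtain ⟨hγ0, hγ1⟩ := hγ
  change _ ↔ criticalCoeff γ < α
  constructor
  · rintro ⟨t, ht, hpos⟩
    have hle := criticalCoeff_mul_rpow_le_add_one hγ0 hγ1 (sq_nonneg t)
    rw [← rpow_two_mul ht.le] at hle
    exact lt_of_mul_lt_mul_right (by linarith) (rpow_nonneg ht.le (2 * γ))
  · intro hα
    have hx : 0 < γ / (1 - γ) := div_pos hγ0 (sub_pos.2 hγ1)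
    refine ⟨√(γ / (1 - γ)), sqrt_pos.2 hx, ?_⟩
    rw [rpow_two_mul (sqrt_nonneg _), sq_sqrt hx.le]
    have heq := criticalCoeff_mul_rpow_eq_add_one hγ0 hγ1
    have hxγ : 0 < (γ / (1 - γ)) ^ γ := rpow_pos_of_pos hx γ
    nlinarith [mul_lt_mul_of_pos_right hα hxγ]

/-- For `γ ∈ (0,1)` and `α > 0`, the set where `f_α(t) = α t^{2γ} − t² − 1`
is positive on `(0,∞)` is nonempty iff `α > γ^{−γ}(1−γ)^{γ−1}`. -/
theorem fA_pos_set_nonempty_iff (γ α : ℝ) (hγ : γ ∈ Ioo (0:ℝ) 1)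
    (hα : 0 < α) :
    {t : ℝ | 0 < t ∧ 0 < α * t ^ (2 * γ) - t ^ 2 - 1}.Nonempty ↔
      γ ^ (-γ) * (1 - γ) ^ (γ - 1) < α :=
  fA_pos_set_nonempty_iff_general γ α hγ
end
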